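/- arXiv:2404.00738 — 2 statements merged into one kernel-verified Lean document; each statement's English description precedes it below -/
import Mathlib

section
/- Let 𝔭, 𝔮 ∈ A be distinct monic irreducible polynomials. Let M be an abelian group and f : GL₂(K∞) → M a function satisfying f|γ = f for every γ ∈ Γ∞. Then for every integer k ≥ 1 one has (f|B_{𝔭^k})|T_𝔮 = (f|T_𝔮)|B_{𝔭^k}. In particular, if f|T_𝔮 = (q^{deg 𝔮} + 1)·f, then (f|B_{𝔭^k})|T_𝔮 = (q^{deg 𝔮} + 1)·(f|B_{𝔭^k}). -/
/-!
Multiplication by `a` permutes the residues `b mod 𝔮` when `a` is prime to `𝔮`, and for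
`b' ≡ a b (mod 𝔮)` the matrices `B_a · [[1,b],[0,𝔮]]` and `[[1,b'],[0,𝔮]] · B_a` differ by a
left factor `[[1,t],[0,1]] ∈ Γ∞`. Together with `B_a · B_𝔮 = B_𝔮 · B_a`, this matches the terms of
`(f|B_a)|T_𝔮` with those of `(f|T_𝔮)|B_a` one by one. For `a = 𝔭^k` with `𝔭 ≠ 𝔮` monic
irreducible, `a` is prime to `𝔮`.
-/

open Polynomial
open scoped Classical

namespace DrinfeldPaper

noncomputable section

/-- `K∞ = F((π))`, the field of formal Laurent series over `F` in the variable `π`. -/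
abbrev Kinf (F : Type*) [Field F] : Type _ := LaurentSeries F

/-- The uniformizer `π` of `K∞`. -/
def piK (F : Type*) [Field F] : Kinf F := HahnSeries.single 1 1

/-- The embedding of `A = F[T]` into `K∞` sending `T` to `π⁻¹`. -/
def embA (F : Type*) [Field F] : Polynomial F →ₐ[F] Kinf F :=
  Polynomial.aeval (piK F)⁻¹

/-- `GL₂(K∞)`, the general linear group of 2×2 matrices over `K∞`. -/
abbrev GL2 (F : Type*) [Field F] : Type _ := (Matrix (Fin 2) (Fin 2) (Kinf F))ˣ

/-- Evaluate a function on `GL₂(K∞)` at a matrix (which, in every use below, is invertible). -/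
def evalGL {F : Type*} [Field F] {M : Type*} [AddCommGroup M]
    (f : GL2 F → M) (A : Matrix (Fin 2) (Fin 2) (Kinf F)) : M :=
  if h : IsUnit A then f h.unit else 0

/-- The slash action `(f|γ)(g) = f(γ·g)`. -/
def lslash {F : Type*} [Field F] {M : Type*} [AddCommGroup M]
    (f : GL2 F → M) (A : Matrix (Fin 2) (Fin 2) (Kinf F)) : GL2 F → M :=
  fun g => evalGL f (A * (g : Matrix (Fin 2) (Fin 2) (Kinf F)))

/-- The polynomial of degree `< n` with coefficients `c 0, …, c (n-1)`. -/
def polyOf {F : Type*} [Field F] {n : ℕ} (c : Fin n → F) : Polynomial F :=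
  ∑ i : Fin n, Polynomial.C (c i) * Polynomial.X ^ (i : ℕ)

/-- The Hecke operator `U_𝔭`: `f|U_𝔭 = Σ_{b ∈ A, deg b < deg 𝔭} f|[[1,b],[0,𝔭]]`. -/
def heckeU {F : Type*} [Field F] [Fintype F] {M : Type*} [AddCommGroup M]
    (p : Polynomial F) (f : GL2 F → M) : GL2 F → M :=
  fun g => ∑ c : Fin p.natDegree → F,
    lslash f !![1, embA F (polyOf c); 0, embA F p] g

/-- The Hecke operator `T_𝔮`:
`f|T_𝔮 = f|[[𝔮,0],[0,1]] + Σ_{b ∈ A, deg b < deg 𝔮} f|[[1,b],[0,𝔮]]`. -/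
def heckeT {F : Type*} [Field F] [Fintype F] {M : Type*} [AddCommGroup M]
    (p : Polynomial F) (f : GL2 F → M) : GL2 F → M :=
  fun g => lslash f !![embA F p, 0; 0, 1] g + heckeU p f g

/-- `Γ∞`, the subgroup of upper-triangular matrices in `GL₂(A)`. -/
def GammaInf (F : Type*) [Field F] : Set (GL2 F) :=
  {γ | ∃ (a d : Fˣ) (b : Polynomial F),
    (γ : Matrix (Fin 2) (Fin 2) (Kinf F)) =
      !![algebraMap F (Kinf F) a, embA F b; 0, algebraMap F (Kinf F) d]}

/-- `Γ₀(n)`, the matrices in `GL₂(A)` whose lower-left entry is divisible by `n`. -/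
def Gamma0 {F : Type*} [Field F] (n : Polynomial F) : Set (GL2 F) :=
  {γ | ∃ a b c d : Polynomial F, n ∣ c ∧ IsUnit (a * d - b * c) ∧
    (γ : Matrix (Fin 2) (Fin 2) (Kinf F)) = !![embA F a, embA F b; embA F c, embA F d]}

section PolyOf

variable {F : Type*} [Field F]

lemma polyOf_coeff {n : ℕ} (c : Fin n → F) (j : ℕ) :
    (polyOf c).coeff j = if h : j < n then c ⟨j, h⟩ else 0 := by
  simp only [polyOf, finsetSum_coeff, coeff_C_mul, coeff_X_pow]
  split_ifs with h
  · rw [Finset.sum_eq_single ⟨j, h⟩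
      (fun i _ hi => by rw [if_neg fun hj => hi (Fin.ext hj.symm), mul_zero]) (by simp)]
    simp
  · exact Finset.sum_eq_zero fun i _ => by simp [show j ≠ i from fun hj => h (hj ▸ i.isLt)]

lemma polyOf_injective {n : ℕ} : Function.Injective (polyOf (F := F) (n := n)) := by
  intro c c' h
  funext i
  simpa [polyOf_coeff] using congrArg (coeff · i) h

lemma degree_polyOf_lt {n : ℕ} (c : Fin n → F) : (polyOf c).degree < n :=
  (degree_lt_iff_coeff_zero _ _).2 fun j hj => by
    rw [polyOf_coeff, dif_neg (by exact_mod_cast hj.not_gt)]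

lemma polyOf_coeff_eq_self {n : ℕ} {p : F[X]} (hp : p.degree < n) :
    polyOf (fun i : Fin n => p.coeff i) = p := by
  ext j
  rw [polyOf_coeff]
  split_ifs with h
  · rfl
  · exact (coeff_eq_zero_of_degree_lt (hp.trans_le (by exact_mod_cast not_lt.1 h))).symm

def mulModCoeffs (a q : F[X]) (c : Fin q.natDegree → F) : Fin q.natDegree → F :=
  fun i => ((a * polyOf c) %ₘ q).coeff i

lemma polyOf_mulModCoeffs {a q : F[X]} (hq : q.Monic) (c : Fin q.natDegree → F) :
    polyOf (mulModCoeffs a q c) = (a * polyOf c) %ₘ q :=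
  polyOf_coeff_eq_self ((degree_modByMonic_lt _ hq).trans_eq (degree_eq_natDegree hq.ne_zero))

lemma mulModCoeffs_bijective [Finite F] {a q : F[X]} (hq : q.Monic) (ha : IsCoprime q a) :
    Function.Bijective (mulModCoeffs a q) := by
  refine Finite.injective_iff_bijective.mp fun c c' h => polyOf_injective ?_
  have hmod : (a * polyOf c) %ₘ q = (a * polyOf c') %ₘ q := by
    rw [← polyOf_mulModCoeffs hq, ← polyOf_mulModCoeffs hq, h]
  have hdvd : q ∣ a * (polyOf c' - polyOf c) := by
    have := dvd_sub (dvd_modByMonic_sub (a * polyOf c) q) (dvd_modByMonic_sub (a * polyOf c') q)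
    rwa [hmod, sub_sub_sub_cancel_left, ← mul_sub] at this
  have hdeg : (polyOf c' - polyOf c).degree < q.degree := by
    rw [degree_eq_natDegree hq.ne_zero]
    exact (degree_sub_le _ _).trans_lt (max_lt (degree_polyOf_lt c') (degree_polyOf_lt c))
  exact (sub_eq_zero.mp (eq_zero_of_dvd_of_degree_lt (ha.dvd_of_dvd_mul_left hdvd) hdeg)).symm

end PolyOf

lemma diag_mul_upper_eq {R : Type*} [CommRing R] {a b q r s : R} (h : a * b = r + q * s) :
    !![a, 0; 0, 1] * !![1, b; 0, q] = !![1, s; 0, 1] * (!![1, r; 0, q] * !![a, 0; 0, 1]) := by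
  simp only [Matrix.mul_fin_two]
  congr 1
  simp [h]
  ring

section Slash

variable {F : Type*} [Field F] {M : Type*} [AddCommGroup M]

lemma lslash_lslash (f : GL2 F → M) (A B : Matrix (Fin 2) (Fin 2) (Kinf F)) :
    lslash (lslash f A) B = lslash f (A * B) := by
  funext g
  change evalGL (lslash f A) (B * g) = evalGL f (A * B * g)
  by_cases h : IsUnit (B * (g : Matrix (Fin 2) (Fin 2) (Kinf F)))
  · rw [evalGL, dif_pos h]
    change evalGL f (A * h.unit) = _
    rw [h.unit_spec, Matrix.mul_assoc]
  · rw [evalGL, dif_neg h, evalGL, dif_neg]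
    rw [Matrix.mul_assoc, Matrix.isUnit_iff_isUnit_det, Matrix.det_mul]
    exact fun h' => h ((Matrix.isUnit_iff_isUnit_det _).2 (isUnit_of_mul_isUnit_right h'))

lemma lslash_add (u v : GL2 F → M) (A : Matrix (Fin 2) (Fin 2) (Kinf F)) :
    lslash (u + v) A = lslash u A + lslash v A := by
  funext g
  simp only [lslash, evalGL, Pi.add_apply]
  split_ifs <;> simp

lemma lslash_sum {ι : Type*} (s : Finset ι) (u : ι → GL2 F → M)
    (A : Matrix (Fin 2) (Fin 2) (Kinf F)) :
    lslash (∑ i ∈ s, u i) A = ∑ i ∈ s, lslash (u i) A := by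
  funext g
  simp only [lslash, evalGL, Finset.sum_apply]
  split_ifs <;> simp

lemma lslash_nsmul (m : ℕ) (u : GL2 F → M) (A : Matrix (Fin 2) (Fin 2) (Kinf F)) :
    lslash (m • u) A = m • lslash u A := by
  funext g
  simp only [lslash, evalGL, Pi.smul_apply]
  split_ifs <;> simp

lemma evalGL_mul_of_mem_GammaInf {f : GL2 F → M}
    (hf : ∀ γ ∈ GammaInf F, ∀ g, f (γ * g) = f g) {γ : GL2 F} (hγ : γ ∈ GammaInf F)
    (A : Matrix (Fin 2) (Fin 2) (Kinf F)) :
    evalGL f ((γ : Matrix (Fin 2) (Fin 2) (Kinf F)) * A) = evalGL f A := by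
  by_cases hA : IsUnit A
  · rw [evalGL, dif_pos (γ.isUnit.mul hA), evalGL, dif_pos hA,
      show (γ.isUnit.mul hA).unit = γ * hA.unit from Units.ext (by simp)]
    exact hf γ hγ _
  · rw [evalGL, dif_neg, evalGL, dif_neg hA]
    exact fun h => hA (by simpa [← mul_assoc] using (γ⁻¹).isUnit.mul h)

lemma exists_mem_GammaInf_coe_eq (b : F[X]) :
    ∃ γ ∈ GammaInf F, (γ : Matrix (Fin 2) (Fin 2) (Kinf F)) = !![1, embA F b; 0, 1] := by
  have hu : IsUnit !![(1 : Kinf F), embA F b; 0, 1] := by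
    simp [Matrix.isUnit_iff_isUnit_det, Matrix.det_fin_two_of]
  exact ⟨hu.unit, ⟨1, 1, b, by simp⟩, hu.unit_spec⟩

lemma lslash_unipotent_mul {f : GL2 F → M} (hf : ∀ γ ∈ GammaInf F, ∀ g, f (γ * g) = f g)
    (b : F[X]) (A : Matrix (Fin 2) (Fin 2) (Kinf F)) :
    lslash f (!![1, embA F b; 0, 1] * A) = lslash f A := by
  obtain ⟨γ, hγ, hγb⟩ := exists_mem_GammaInf_coe_eq b
  funext g
  simp only [lslash, ← hγb, Matrix.mul_assoc]
  exact evalGL_mul_of_mem_GammaInf hf hγ _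

lemma lslash_diag_mul_upper {f : GL2 F → M} (hf : ∀ γ ∈ GammaInf F, ∀ g, f (γ * g) = f g)
    {a q : F[X]} (hq : q.Monic) (c : Fin q.natDegree → F) :
    lslash f (!![embA F a, 0; 0, 1] * !![1, embA F (polyOf c); 0, embA F q]) =
      lslash f (!![1, embA F (polyOf (mulModCoeffs a q c)); 0, embA F q] *
        !![embA F a, 0; 0, 1]) := by
  have hdiv := congrArg (embA F) (modByMonic_add_div (a * polyOf c) q)
  rw [map_add, map_mul, map_mul] at hdiv
  rw [diag_mul_upper_eq hdiv.symm, lslash_unipotent_mul hf, polyOf_mulModCoeffs hq]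

end Slash

section Hecke

variable {F : Type*} [Field F] [Fintype F] {M : Type*} [AddCommGroup M]

lemma heckeT_eq (q : F[X]) (f : GL2 F → M) :
    heckeT q f = lslash f !![embA F q, 0; 0, 1] +
      ∑ c : Fin q.natDegree → F, lslash f !![1, embA F (polyOf c); 0, embA F q] := by
  funext g
  simp [heckeT, heckeU, Finset.sum_apply]

theorem heckeT_lslash_diag {f : GL2 F → M} (hf : ∀ γ ∈ GammaInf F, ∀ g, f (γ * g) = f g)
    {a q : F[X]} (hq : q.Monic) (ha : IsCoprime q a) :
    heckeT q (lslash f !![embA F a, 0; 0, 1]) = lslash (heckeT q f) !![embA F a, 0; 0, 1] := by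
  have hdiag : !![embA F a, 0; 0, 1] * !![embA F q, 0; 0, 1] =
      !![embA F q, 0; 0, 1] * !![embA F a, 0; 0, 1] := by
    simp [mul_comm]
  rw [heckeT_eq, heckeT_eq, lslash_add, lslash_sum, lslash_lslash, hdiag]
  simp only [lslash_lslash, add_right_inj]
  exact Fintype.sum_bijective _ (mulModCoeffs_bijective hq ha) _ _
    (lslash_diag_mul_upper hf hq)

end Hecke

theorem statement1_general {F : Type*} [Field F] [Fintype F] {M : Type*} [AddCommGroup M]
    (𝔭 𝔮 : Polynomial F) (h𝔭m : 𝔭.Monic) (h𝔭 : Irreducible 𝔭)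
    (h𝔮m : 𝔮.Monic) (h𝔮 : Irreducible 𝔮) (hne : 𝔭 ≠ 𝔮)
    (f : GL2 F → M) (hf : ∀ γ ∈ GammaInf F, ∀ g, f (γ * g) = f g)
    (k : ℕ) :
    heckeT 𝔮 (lslash f !![embA F (𝔭 ^ k), 0; 0, 1]) =
      lslash (heckeT 𝔮 f) !![embA F (𝔭 ^ k), 0; 0, 1] ∧
    ((heckeT 𝔮 f = fun g => (Fintype.card F ^ 𝔮.natDegree + 1) • f g) →
      heckeT 𝔮 (lslash f !![embA F (𝔭 ^ k), 0; 0, 1]) =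
        fun g => (Fintype.card F ^ 𝔮.natDegree + 1) •
          lslash f !![embA F (𝔭 ^ k), 0; 0, 1] g) := by
  have hndvd : ¬ 𝔭 ∣ 𝔮 := fun h =>
    hne (eq_of_monic_of_associated h𝔭m h𝔮m (h𝔭.associated_of_dvd h𝔮 h))
  have hcomm := heckeT_lslash_diag hf h𝔮m (h𝔭.coprime_pow_of_not_dvd k hndvd)
  refine ⟨hcomm, fun hT => ?_⟩
  rw [hcomm, hT]
  exact lslash_nsmul _ f _

/-- For `𝔭 ≠ 𝔮` monic irreducible in `A = F[T]`, `M` an abelian group and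
`f : GL₂(K∞) → M` invariant under `Γ∞`, one has `(f|B_{𝔭^k})|T_𝔮 = (f|T_𝔮)|B_{𝔭^k}` for every
`k ≥ 1`; in particular, if `f|T_𝔮 = (q^{deg 𝔮} + 1)·f`, then
`(f|B_{𝔭^k})|T_𝔮 = (q^{deg 𝔮} + 1)·(f|B_{𝔭^k})`. -/
theorem statement1 {F : Type*} [Field F] [Fintype F] {M : Type*} [AddCommGroup M]
    (𝔭 𝔮 : Polynomial F) (h𝔭m : 𝔭.Monic) (h𝔭 : Irreducible 𝔭)
    (h𝔮m : 𝔮.Monic) (h𝔮 : Irreducible 𝔮) (hne : 𝔭 ≠ 𝔮)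
    (f : GL2 F → M) (hf : ∀ γ ∈ GammaInf F, ∀ g, f (γ * g) = f g)
    (k : ℕ) (hk : 1 ≤ k) :
    heckeT 𝔮 (lslash f !![embA F (𝔭 ^ k), 0; 0, 1]) =
      lslash (heckeT 𝔮 f) !![embA F (𝔭 ^ k), 0; 0, 1] ∧
    ((heckeT 𝔮 f = fun g => (Fintype.card F ^ 𝔮.natDegree + 1) • f g) →
      heckeT 𝔮 (lslash f !![embA F (𝔭 ^ k), 0; 0, 1]) =
        fun g => (Fintype.card F ^ 𝔮.natDegree + 1) •
          lslash f !![embA F (𝔭 ^ k), 0; 0, 1] g) :=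
  statement1_general 𝔭 𝔮 h𝔭m h𝔭 h𝔮m h𝔮 hne f hf k

end

end DrinfeldPaper
end

section
/- Let F be a finite field and A = F[T]. Let 𝔭 ∈ A be a monic irreducible polynomial and m ∈ A a monic polynomial divisible by 𝔭. Let Γ₀(m) = {[[a,b],[c,d]] ∈ GL₂(A) : m divides c}, let Γ₀(m,𝔭) = {[[a,b],[c,d]] ∈ GL₂(A) : m divides c and 𝔭 divides b}, and let Γ∞ denote the subgroup of upper-triangular matrices in GL₂(A). Then every element of Γ₀(m) can be written as δ·τ with δ ∈ Γ₀(m,𝔭) and τ ∈ Γ∞; in particular, Γ₀(m) is generated by Γ₀(m,𝔭) and Γ∞. -/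
/-!
For `γ = [[a, b], [c, d]]` in `Γ₀(m)` we have `𝔭 ∣ m ∣ c` while `ad - bc` is a unit, so `a` is
invertible modulo `𝔭`. Choosing `t` with `at + b ≡ 0 (mod 𝔭)`, the product `γ · [[1, t], [0, 1]]`
has upper right entry `at + b` and the same lower left entry `c`, hence lies in `Γ₀(m, 𝔭)`.
-/

open Polynomial

noncomputable section

namespace DrinfeldPaper

/-- `GL₂(A)` for `A = F[T]`: invertible 2×2 matrices over `A`, i.e. matrices over `A` whose
determinant lies in `F^×`. -/
abbrev GL2A (F : Type*) [Field F] : Type _ := (Matrix (Fin 2) (Fin 2) (Polynomial F))ˣ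

/-- `Γ₀(m) = {[[a,b],[c,d]] ∈ GL₂(A) : m ∣ c}`. -/
def Gamma0A {F : Type*} [Field F] (m : Polynomial F) : Set (GL2A F) :=
  {γ | m ∣ (γ : Matrix (Fin 2) (Fin 2) (Polynomial F)) 1 0}

/-- `Γ₀(m,𝔭) = {[[a,b],[c,d]] ∈ GL₂(A) : m ∣ c and 𝔭 ∣ b}`. -/
def Gamma0A' {F : Type*} [Field F] (m 𝔭 : Polynomial F) : Set (GL2A F) :=
  {γ | m ∣ (γ : Matrix (Fin 2) (Fin 2) (Polynomial F)) 1 0 ∧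
       𝔭 ∣ (γ : Matrix (Fin 2) (Fin 2) (Polynomial F)) 0 1}

/-- `Γ∞`, the subgroup of upper-triangular matrices in `GL₂(A)`. -/
def GammaInfA (F : Type*) [Field F] : Set (GL2A F) :=
  {γ | (γ : Matrix (Fin 2) (Fin 2) (Polynomial F)) 1 0 = 0}

end DrinfeldPaper

namespace Matrix.GeneralLinearGroup

variable {R : Type*} [CommRing R]

theorem isCoprime_col_zero (g : GL (Fin 2) R) : IsCoprime (g 0 0) (g 1 0) := by
  obtain ⟨u, hu⟩ := isUnits_det_units g
  refine ⟨↑u⁻¹ * g 1 1, -(↑u⁻¹ * g 0 1), ?_⟩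
  have hdet := u.inv_mul
  rw [hu, det_fin_two] at hdet
  linear_combination hdet

theorem mul_upperRightHom_one_zero (g : GL (Fin 2) R) (x : R) :
    (g * upperRightHom x) 1 0 = g 1 0 := by
  simp [mul_apply, Fin.sum_univ_two]

theorem mul_upperRightHom_zero_one (g : GL (Fin 2) R) (x : R) :
    (g * upperRightHom x) 0 1 = g 0 0 * x + g 0 1 := by
  simp [mul_apply, Fin.sum_univ_two]

end Matrix.GeneralLinearGroup

theorem IsCoprime.exists_dvd_mul_add {R : Type*} [CommRing R] {a p : R} (h : IsCoprime a p)
    (b : R) : ∃ t, p ∣ a * t + b := by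
  obtain ⟨x, y, hxy⟩ := h
  exact ⟨-(x * b), y * b, by linear_combination (-b) * hxy⟩

namespace DrinfeldPaper

open Matrix.GeneralLinearGroup in
theorem statement10_general {F : Type*} [Field F]
    (𝔭 m : Polynomial F) (hdvd : 𝔭 ∣ m) :
    (∀ γ ∈ Gamma0A m, ∃ δ ∈ Gamma0A' m 𝔭, ∃ τ ∈ GammaInfA F, γ = δ * τ) ∧
    Gamma0A m ⊆ ↑(Subgroup.closure (Gamma0A' m 𝔭 ∪ GammaInfA F)) := by
  have decomp : ∀ γ ∈ Gamma0A m, ∃ δ ∈ Gamma0A' m 𝔭, ∃ τ ∈ GammaInfA F, γ = δ * τ := by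
    intro γ hγ
    have hcop : IsCoprime (γ 0 0) 𝔭 :=
      (isCoprime_col_zero γ).of_isCoprime_of_dvd_right (hdvd.trans hγ)
    obtain ⟨t, ht⟩ := hcop.exists_dvd_mul_add (γ 0 1)
    refine ⟨γ * upperRightHom t, ⟨?_, ?_⟩, upperRightHom (-t), ?_, ?_⟩
    · rwa [mul_upperRightHom_one_zero]
    · rwa [mul_upperRightHom_zero_one]
    · simp [GammaInfA]
    · rw [mul_assoc, ← AddChar.map_add_eq_mul, add_neg_cancel, AddChar.map_zero_eq_one, mul_one]
  refine ⟨decomp, fun γ hγ => ?_⟩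
  obtain ⟨δ, hδ, τ, hτ, rfl⟩ := decomp γ hγ
  exact mul_mem (Subgroup.subset_closure (.inl hδ)) (Subgroup.subset_closure (.inr hτ))

/-- Let `𝔭 ∈ A` be monic irreducible and `m ∈ A` monic with `𝔭 ∣ m`.
Every element of `Γ₀(m)` can be written as `δ·τ` with `δ ∈ Γ₀(m,𝔭)` and `τ ∈ Γ∞`;
in particular, `Γ₀(m)` is generated by `Γ₀(m,𝔭)` and `Γ∞`. -/
theorem statement10 {F : Type*} [Field F] [Fintype F]
    (𝔭 m : Polynomial F) (h𝔭m : 𝔭.Monic) (h𝔭 : Irreducible 𝔭)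
    (hm : m.Monic) (hdvd : 𝔭 ∣ m) :
    (∀ γ ∈ Gamma0A m, ∃ δ ∈ Gamma0A' m 𝔭, ∃ τ ∈ GammaInfA F, γ = δ * τ) ∧
    Gamma0A m ⊆ ↑(Subgroup.closure (Gamma0A' m 𝔭 ∪ GammaInfA F)) :=
  statement10_general 𝔭 m hdvd

end DrinfeldPaper

end
end
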